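/- arXiv:2512.07340 — 9 statements merged into one kernel-verified Lean document; each statement's English description precedes it below -/
import Mathlib

section
/- If a word x over {0,1} (finite or infinite) is not balanced, then there exists a word w such that both 0w0 and 1w1 are factors of x. -/
/-!
Among pairs of factors `u`, `v` of `x` of equal length with `|u|₁ ≥ |v|₁ + 2`, take one of minimal
length. Then no shorter factor of `u` has two more `1`s than a factor of `v` of the same length.
Removing the first (last) letters therefore forces `u` to begin (end) with `1` and `v` with `0`, so
`u = 1s1` and `v = 0t0` with `|s|₁ = |t|₁`. Bracketing prefixes and suffixes of `s`, `t` by these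
outer letters shows that neither has more `1`s than the corresponding part of the other, so all
prefixes of `s` and `t` have the same number of `1`s, whence `s = t`.
-/

/-- A word over `{0,1}`, either finite or infinite. -/
def Word01 := List Bool ⊕ (ℕ → Bool)

/-- `v` is a factor (contiguous subword) of the word `x`. -/
def IsFactor (v : List Bool) : Word01 → Prop
  | Sum.inl l => v <:+: l
  | Sum.inr s => ∃ m : ℕ, ∀ i : ℕ, i < v.length → v[i]? = some (s (m + i))

/-- A word is balanced if any two factors of the same length have numbers of
`1`'s differing by at most one. -/
def IsBalancedWord (x : Word01) : Prop :=
  ∀ u v : List Bool, IsFactor u x → IsFactor v x → u.length = v.length →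
    |(u.count true : ℤ) - (v.count true : ℤ)| ≤ 1

theorem IsFactor.of_infix {x : Word01} {u v : List Bool} (hu : IsFactor u x) (hv : v <:+: u) :
    IsFactor v x := by
  cases x with
  | inl l => exact hv.trans hu
  | inr s =>
    obtain ⟨m, hm⟩ := hu
    obtain ⟨a, b, rfl⟩ := hv
    refine ⟨m + a.length, fun i hi => ?_⟩
    have h := hm (a.length + i) (by simp only [List.length_append]; omega)
    rwa [List.getElem?_append_left (by simp only [List.length_append]; omega),
      List.getElem?_append_right (by omega), Nat.add_sub_cancel_left, ← Nat.add_assoc] at h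

theorem exists_count_add_two_le_of_not_balanced {x : Word01} (hx : ¬ IsBalancedWord x) :
    ∃ u v : List Bool, IsFactor u x ∧ IsFactor v x ∧ u.length = v.length ∧
      v.count true + 2 ≤ u.count true := by
  simp only [IsBalancedWord, not_forall, abs_le, not_and_or, not_le] at hx
  obtain ⟨u, v, hu, hv, hlen, hgap | hgap⟩ := hx
  · exact ⟨v, u, hv, hu, hlen.symm, by omega⟩
  · exact ⟨u, v, hu, hv, hlen, by omega⟩

theorem List.eq_of_count_take_eq {s t : List Bool} (hlen : s.length = t.length)
    (h : ∀ k, (s.take k).count true = (t.take k).count true) : s = t := by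
  induction s generalizing t with
  | nil => exact (List.length_eq_zero_iff.mp hlen.symm).symm
  | cons a s ih =>
    obtain _ | ⟨b, t⟩ := t
    · simp at hlen
    have hab : a = b := by
      have h1 := h 1
      cases a <;> cases b <;> simp_all
    subst hab
    refine congrArg _ (ih (by simpa using hlen) fun k => ?_)
    simpa [List.count_cons] using h (k + 1)

theorem eq_of_count_add_two_le_of_minimal {u v : List Bool} (hlen : u.length = v.length)
    (hgap : v.count true + 2 ≤ u.count true)
    (hmin : ∀ a b : List Bool, a <:+: u → b <:+: v → a.length = b.length →
      a.length < u.length → a.count true ≤ b.count true + 1) :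
    ∃ w, u = true :: (w ++ [true]) ∧ v = false :: (w ++ [false]) := by
  obtain _ | ⟨a, u⟩ := u
  · simp at hgap
  obtain _ | ⟨b, v⟩ := v
  · simp at hlen
  have htail := hmin u v ⟨[a], [], by simp⟩ ⟨[b], [], by simp⟩ (by simpa using hlen) (by simp)
  obtain ⟨rfl, rfl⟩ : a = true ∧ b = false := by
    cases a <;> cases b <;> simp at hgap ⊢ <;> omega
  obtain rfl | ⟨s, c, rfl⟩ := u.eq_nil_or_concat'
  · simp at hgap
  obtain rfl | ⟨t, d, rfl⟩ := v.eq_nil_or_concat'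
  · simp at hlen
  have hinit := hmin (true :: s) (false :: t) ⟨[], [c], by simp⟩ ⟨[], [d], by simp⟩
    (by simpa using hlen) (by simp)
  obtain ⟨rfl, rfl⟩ : c = true ∧ d = false := by
    cases c <;> cases d <;> simp at hgap hinit htail ⊢ <;> omega
  refine ⟨s, rfl, congrArg (fun w => false :: (w ++ [false])) ?_⟩
  simp only [List.length_cons, List.length_append] at hlen
  refine (List.eq_of_count_take_eq (by omega) fun k => ?_).symm
  have hpre := hmin (true :: s.take k) (false :: t.take k)
    ⟨[], s.drop k ++ [true], by simp [← List.append_assoc]⟩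
    ⟨[], t.drop k ++ [false], by simp [← List.append_assoc]⟩ (by simp; omega) (by simp)
  have hsuf := hmin (s.drop k ++ [true]) (t.drop k ++ [false])
    ⟨true :: s.take k, [], by simp [← List.append_assoc]⟩
    ⟨false :: t.take k, [], by simp [← List.append_assoc]⟩ (by simp; omega) (by simp)
  have hs : (s.take k).count true + (s.drop k).count true = s.count true := by
    rw [← List.count_append, List.take_append_drop]
  have ht : (t.take k).count true + (t.drop k).count true = t.count true := by
    rw [← List.count_append, List.take_append_drop]
  simp only [List.count_cons, List.count_append, List.count_nil, beq_self_eq_true, beq_iff_eq,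
    Bool.false_eq_true, if_true, if_false] at hinit hgap hpre hsuf
  omega

theorem exists_infix_of_count_add_two_le {u v : List Bool} (hlen : u.length = v.length)
    (hgap : v.count true + 2 ≤ u.count true) :
    ∃ w, true :: (w ++ [true]) <:+: u ∧ false :: (w ++ [false]) <:+: v := by
  induction hn : u.length using Nat.strong_induction_on generalizing u v with
  | _ n ih =>
  by_cases hmin : ∀ a b : List Bool, a <:+: u → b <:+: v → a.length = b.length →
      a.length < u.length → a.count true ≤ b.count true + 1
  · obtain ⟨w, rfl, rfl⟩ := eq_of_count_add_two_le_of_minimal hlen hgap hmin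
    exact ⟨w, List.infix_refl _, List.infix_refl _⟩
  · push Not at hmin
    obtain ⟨a, b, ha, hb, hab, hlt, hgap'⟩ := hmin
    obtain ⟨w, hw₁, hw₀⟩ := ih a.length (hn ▸ hlt) hab (by omega) rfl
    exact ⟨w, hw₁.trans ha, hw₀.trans hb⟩

theorem not_balanced_exists_0w0_1w1 (x : Word01) (hx : ¬ IsBalancedWord x) :
    ∃ w : List Bool,
      IsFactor (false :: (w ++ [false])) x ∧ IsFactor (true :: (w ++ [true])) x := by
  obtain ⟨u, v, hu, hv, hlen, hgap⟩ := exists_count_add_two_le_of_not_balanced hx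
  obtain ⟨w, hw₁, hw₀⟩ := exists_infix_of_count_add_two_le hlen hgap
  exact ⟨w, hv.of_infix hw₀, hu.of_infix hw₁⟩
end

section
/- Let X = [[a,b],[c,d]] be a positive 2×2 matrix with determinant 1 and trace > 2. If θ ≤ b/c ≤ θ⁻¹ for some θ ∈ (0,1), then tr X ≥ √θ · ‖X‖, where ‖X‖ is the Hilbert–Schmidt (Frobenius) norm. -/
/-- Trace–norm comparison for positive `SL(2,ℝ)` matrices whose ratio `b/c`
is pinched between `θ` and `θ⁻¹`. -/
theorem trace_ge_sqrt_theta_norm (a b c d θ : ℝ)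
    (ha : 0 < a) (hb : 0 < b) (hc : 0 < c) (hd : 0 < d)
    (hdet : a * d - b * c = 1) (htr : 2 < a + d)
    (hθ : θ ∈ Set.Ioo (0 : ℝ) 1)
    (h1 : θ ≤ b / c) (h2 : b / c ≤ θ⁻¹) :
    a + d ≥ Real.sqrt θ * Real.sqrt (a ^ 2 + b ^ 2 + c ^ 2 + d ^ 2) := by
  obtain ⟨hθ0, hθ1⟩ := hθ
  have hbc1 : θ * c ≤ b := by
    have := (le_div_iff₀ hc).mp h1
    nlinarith
  have hbc2 : θ * b ≤ c := by
    have h := (div_le_iff₀ hc).mp h2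
    have hinv : θ * θ⁻¹ = 1 := mul_inv_cancel₀ hθ0.ne'
    nlinarith
  have key : θ * (a ^ 2 + b ^ 2 + c ^ 2 + d ^ 2) ≤ (a + d) ^ 2 := by
    nlinarith [sq_nonneg a, sq_nonneg d, mul_pos hb hc]
  calc Real.sqrt θ * Real.sqrt (a ^ 2 + b ^ 2 + c ^ 2 + d ^ 2)
      = Real.sqrt (θ * (a ^ 2 + b ^ 2 + c ^ 2 + d ^ 2)) :=
        (Real.sqrt_mul hθ0.le _).symm
    _ ≤ Real.sqrt ((a + d) ^ 2) := Real.sqrt_le_sqrt key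
    _ = a + d := by
        rw [Real.sqrt_sq (by positivity)]
end

section
/- Let U, V ∈ SL(2,ℝ), both with trace > 2 and real eigenvalues, such that UV and VU also have trace > 2, and suppose tr((UV)²) > tr(U²V²). Fix integers p, q ≥ 1 and m ≥ 0, and set X = UV, X̃ = VU, Y = V^q X^m U^p, Ỹ = U^p X̃^m V^q. Then Ỹ − Y = δ·(X − X̃) where δ = Γ_{m+1}(X)Γ_p(U)Γ_q(V) − Γ_m(X)Γ_{p−1}(U)Γ_{q−1}(V) > 0, and consequently η := tr(X(Ỹ − Y)) = δ·tr(X² − XX̃) > 0. -/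
open Matrix

noncomputable def Gam (x : ℝ) (k : ℕ) : ℝ := (x ^ k - x⁻¹ ^ k) / (x - x⁻¹)

noncomputable def Ham (x : ℝ) : ℕ → ℝ
  | 0 => -1
  | k+1 => Gam x k

lemma ch2 (M : Matrix (Fin 2) (Fin 2) ℝ) (h : M.det = 1) :
    M * M = M.trace • M - 1 := by
  have hd := M.det_fin_two
  rw [h] at hd
  ext i j
  fin_cases i <;> fin_cases j <;>
    simp [Matrix.mul_apply, Matrix.trace_fin_two, Fin.sum_univ_two, Matrix.one_apply] <;>
    nlinarith [hd]

section
variable {x : ℝ} (hx : 1 < x)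
include hx

lemma hx_ne : x - x⁻¹ ≠ 0 := by
  have h1 : x⁻¹ < 1 := inv_lt_one_of_one_lt₀ hx
  nlinarith

lemma hx0 : x ≠ 0 := by positivity

lemma Gam_zero : Gam x 0 = 0 := by simp [Gam]

lemma Gam_one : Gam x 1 = 1 := by
  simp [Gam, div_self (hx_ne hx)]

lemma Gam_rec (k : ℕ) : Gam x (k+1) = (x + x⁻¹) * Gam x k - Ham x k := by
  cases k with
  | zero => simp [Ham, Gam_one hx, Gam_zero hx]
  | succ k =>
      have h2 := hx0 hx
      have e1 : x⁻¹ * x ^ (k+1) = x ^ k := by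
        rw [pow_succ']; rw [← mul_assoc, inv_mul_cancel₀ h2, one_mul]
      have e2 : x * x⁻¹ ^ (k+1) = x⁻¹ ^ k := by
        rw [pow_succ']; rw [← mul_assoc, mul_inv_cancel₀ h2, one_mul]
      have key : x^(k+1+1) - x⁻¹^(k+1+1) =
          (x+x⁻¹)*(x^(k+1) - x⁻¹^(k+1)) - (x^k - x⁻¹^k) := by
        linear_combination e2 - e1
      simp only [Ham, Gam]
      rw [key, sub_div, mul_div_assoc]

lemma Gam_nonneg (k : ℕ) : 0 ≤ Gam x k := by
  have h1 : x⁻¹ < 1 := inv_lt_one_of_one_lt₀ hx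
  have h2 : (0:ℝ) < x⁻¹ := by positivity
  have : x⁻¹ ^ k ≤ x ^ k := pow_le_pow_left₀ h2.le (by nlinarith) k
  have hd : 0 < x - x⁻¹ := by nlinarith
  exact div_nonneg (by linarith) hd.le

lemma Gam_lt_succ (k : ℕ) : Gam x k < Gam x (k+1) := by
  have h1 : x⁻¹ < 1 := inv_lt_one_of_one_lt₀ hx
  have h2 : (0:ℝ) < x⁻¹ := by positivity
  have hd : 0 < x - x⁻¹ := by nlinarith
  rw [Gam, Gam, div_lt_div_iff_of_pos_right hd]
  have hxk : 0 < x ^ k := by positivity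
  have hik : 0 < x⁻¹ ^ k := by positivity
  have e1 : x ^ k < x ^ (k+1) := by
    rw [pow_succ]; nlinarith
  have e2 : x⁻¹ ^ (k+1) < x⁻¹ ^ k := by
    rw [pow_succ]; nlinarith
  linarith

lemma Gam_pos (k : ℕ) : 0 < Gam x (k+1) :=
  lt_of_le_of_lt (Gam_nonneg hx k) (Gam_lt_succ hx k)

end

lemma pow_eq (M : Matrix (Fin 2) (Fin 2) ℝ) {x : ℝ} (hx : 1 < x)
    (hdet : M.det = 1) (htr : M.trace = x + x⁻¹) (k : ℕ) :
    M ^ k = Gam x k • M - Ham x k • 1 := by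
  induction k with
  | zero => simp [Gam_zero hx, Ham]
  | succ k ih =>
      rw [pow_succ, ih, sub_mul, smul_mul_assoc, smul_mul_assoc, one_mul,
        ch2 M hdet, htr, Gam_rec hx]
      show _ = _ • M - Gam x k • 1
      module

lemma keyalg (U V : Matrix (Fin 2) (Fin 2) ℝ) (A a b c d e f : ℝ)
    (hX : (U*V)*(U*V) = A • (U*V) - 1)
    (hXt : (V*U)*(V*U) = A • (V*U) - 1) :
    (e•U - f•(1:Matrix (Fin 2) (Fin 2) ℝ)) * (c•(V*U) - d•1) * (a•V - b•1)
      - (a•V - b•1) * (c•(U*V) - d•1) * (e•U - f•1)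
      = (a*c*e*A - a*d*e - b*c*f) • (U*V - V*U) := by
  have h1 : U*(V*(U*V)) = A • (U*V) - 1 := by rw [← hX]; simp [mul_assoc]
  have h2 : V*(U*(V*U)) = A • (V*U) - 1 := by rw [← hXt]; simp [mul_assoc]
  simp only [sub_mul, mul_sub, smul_mul_assoc, mul_smul_comm, smul_smul,
    mul_one, one_mul, mul_assoc, h1, h2]
  module

/-- The difference `Ỹ - Y` is a positive multiple of `X - X̃`, with positive
trace pairing against `X`. -/
theorem Ytilde_sub_Y (U V : Matrix (Fin 2) (Fin 2) ℝ) (l m ν : ℝ)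
    (hU : U.det = 1) (hV : V.det = 1)
    (hl : 1 < l) (hm : 1 < m) (hν : 1 < ν)
    (htrU : U.trace = l + l⁻¹) (htrV : V.trace = m + m⁻¹)
    (htrX : (U * V).trace = ν + ν⁻¹)
    (htrXt : 2 < (V * U).trace)
    (hkey : ((U * V) * (U * V)).trace > (U * U * (V * V)).trace)
    (p q : ℕ) (hp : 1 ≤ p) (hq : 1 ≤ q) (m' : ℕ)
    (Γ : ℝ → ℕ → ℝ) (hΓ : ∀ x : ℝ, ∀ k : ℕ, Γ x k = (x ^ k - x⁻¹ ^ k) / (x - x⁻¹))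
    (X Xt Y Yt : Matrix (Fin 2) (Fin 2) ℝ)
    (hX : X = U * V) (hXt : Xt = V * U)
    (hY : Y = V ^ q * X ^ m' * U ^ p) (hYt : Yt = U ^ p * Xt ^ m' * V ^ q)
    (δ : ℝ)
    (hδ : δ = Γ ν (m' + 1) * Γ l p * Γ m q - Γ ν m' * Γ l (p - 1) * Γ m (q - 1)) :
    Yt - Y = δ • (X - Xt) ∧ 0 < δ ∧
      (X * (Yt - Y)).trace = δ * (X * X - X * Xt).trace ∧
      0 < (X * (Yt - Y)).trace := by
  have hGam : ∀ x : ℝ, ∀ k : ℕ, Γ x k = Gam x k := hΓ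
  obtain ⟨p, rfl⟩ : ∃ p', p = p' + 1 := ⟨p - 1, (Nat.succ_pred_eq_of_pos hp).symm⟩
  obtain ⟨q, rfl⟩ : ∃ q', q = q' + 1 := ⟨q - 1, (Nat.succ_pred_eq_of_pos hq).symm⟩
  -- determinants and traces of X, Xt
  have hdX : (U * V).det = 1 := by rw [Matrix.det_mul, hU, hV]; ring
  have hdXt : (V * U).det = 1 := by rw [Matrix.det_mul, hU, hV]; ring
  have htrXt' : (V * U).trace = ν + ν⁻¹ := by rw [Matrix.trace_mul_comm, htrX]
  have hchX : (U*V)*(U*V) = (ν + ν⁻¹) • (U*V) - 1 := by rw [ch2 _ hdX, htrX]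
  have hchXt : (V*U)*(V*U) = (ν + ν⁻¹) • (V*U) - 1 := by rw [ch2 _ hdXt, htrXt']
  -- power expansions
  have hUp := pow_eq U hl hU htrU (p+1)
  have hVq := pow_eq V hm hV htrV (q+1)
  have hXm := pow_eq (U*V) hν hdX htrX m'
  have hXtm := pow_eq (V*U) hν hdXt htrXt' m'
  set a := Gam m (q+1) with ha
  set b := Gam m q with hb
  set c := Gam ν m' with hc
  set d := Ham ν m' with hd
  set e := Gam l (p+1) with he
  set f := Gam l p with hf
  have hHp : Ham l (p+1) = f := rfl
  have hHq : Ham m (q+1) = b := rfl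
  -- the matrix identity
  have hmain : Yt - Y = δ • (X - Xt) := by
    have hδ' : δ = Gam m (q+1) * Gam ν m' * Gam l (p+1) * (ν + ν⁻¹)
        - Gam m (q+1) * Ham ν m' * Gam l (p+1) - Gam m q * Gam ν m' * Gam l p := by
      rw [hδ, hGam, hGam, hGam, hGam, hGam, hGam, Gam_rec hν]
      simp only [Nat.add_sub_cancel]
      try ring
    rw [hY, hYt, hX, hXt, hUp, hVq, hXm, hXtm, hHp, hHq, hδ']
    exact keyalg U V (ν + ν⁻¹) a b c d e f hchX hchXt
  -- positivity of δ
  have hδpos : 0 < δ := by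
    have hδ' : δ = Gam ν (m'+1) * e * a - c * f * b := by
      rw [hδ, hGam, hGam, hGam, hGam, hGam, hGam]
      simp only [Nat.add_sub_cancel]
      try ring
    have h1 : c < Gam ν (m'+1) := Gam_lt_succ hν m'
    have h2 : f < e := Gam_lt_succ hl p
    have h3 : b < a := Gam_lt_succ hm q
    have h4 : 0 ≤ c := Gam_nonneg hν m'
    have h5 : 0 ≤ f := Gam_nonneg hl p
    have h6 : 0 ≤ b := Gam_nonneg hm q
    have hA : 0 < Gam ν (m'+1) := Gam_pos hν m'
    have he' : 0 < e := Gam_pos hl p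
    have ha' : 0 < a := Gam_pos hm q
    rw [hδ']
    nlinarith [mul_pos (mul_pos (sub_pos.2 h1) he') ha',
      mul_nonneg (mul_nonneg h4 (sub_pos.2 h2).le) ha'.le,
      mul_nonneg (mul_nonneg h4 h5) (sub_pos.2 h3).le]
  refine ⟨hmain, hδpos, ?_, ?_⟩
  · rw [hmain, mul_smul_comm, Matrix.trace_smul, smul_eq_mul, mul_sub]
  · rw [hmain, mul_smul_comm, Matrix.trace_smul, smul_eq_mul, mul_sub]
    have ht : (X * Xt).trace = (U*U*(V*V)).trace := by
      have hxx : X * Xt = (U*(V*V))*U := by rw [hX, hXt]; noncomm_ring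
      rw [hxx, Matrix.trace_mul_comm, ← mul_assoc]
    have hxxt : (X*X).trace = ((U*V)*(U*V)).trace := by rw [hX]
    have : 0 < (X*X - X*Xt).trace := by
      rw [Matrix.trace_sub, hxxt, ht]; linarith
    rw [Matrix.trace_sub] at this ⊢
    exact mul_pos hδpos this
end

section
/- Let U, V ∈ SL(2,ℝ) with traces > 2, let p,q ≥ 1, m ≥ 0, and set X = UV, X̃ = VU, Y = V^q(UV)^m U^p, Ỹ = U^p(VU)^m V^q, W₀ = XYX, W₂ = XỸX. Then W₂ − W₀ = η·X + δ·(X − X̃), where η = tr(X(Ỹ−Y)) and δ·(X − X̃) = Ỹ − Y. -/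
open Matrix

lemma key_XZX (X Z : Matrix (Fin 2) (Fin 2) ℝ)
    (hdet : X.det = 1) (htr : Z.trace = 0) :
    X * Z * X = (X * Z).trace • X + Z := by
  have hd : X 0 0 * X 1 1 - X 0 1 * X 1 0 = 1 := by
    simpa [Matrix.det_fin_two] using hdet
  have ht : Z 0 0 + Z 1 1 = 0 := by
    simpa [Matrix.trace_fin_two] using htr
  ext i j
  fin_cases i <;> fin_cases j <;>
    simp [Matrix.mul_apply, Matrix.trace_fin_two, Fin.sum_univ_two,
      Matrix.smul_apply, Matrix.add_apply] <;>
    first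
      | linear_combination (-(Z 1 1)) * hd - ht
      | linear_combination (-(Z 0 0)) * hd - ht
      | linear_combination Z 0 1 * hd
      | linear_combination Z 1 0 * hd

theorem W2_sub_W0 (U V : Matrix (Fin 2) (Fin 2) ℝ)
    (hU : U.det = 1) (hV : V.det = 1)
    (htrU : 2 < U.trace) (htrV : 2 < V.trace)
    (p q : ℕ) (hp : 1 ≤ p) (hq : 1 ≤ q) (m : ℕ)
    (X Xt Y Yt W0 W2 : Matrix (Fin 2) (Fin 2) ℝ)
    (hX : X = U * V) (hXt : Xt = V * U)
    (hY : Y = V ^ q * (U * V) ^ m * U ^ p)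
    (hYt : Yt = U ^ p * (V * U) ^ m * V ^ q)
    (hW0 : W0 = X * Y * X) (hW2 : W2 = X * Yt * X)
    (η δ : ℝ)
    (hη : η = (X * (Yt - Y)).trace) (hδ : δ • (X - Xt) = Yt - Y) :
    W2 - W0 = η • X + δ • (X - Xt) := by
  have hdetX : X.det = 1 := by rw [hX, Matrix.det_mul, hU, hV]; ring
  have htrZ : (Yt - Y).trace = 0 := by
    rw [← hδ, trace_smul, trace_sub, hX, hXt, Matrix.trace_mul_comm]
    simp
  have h1 : W2 - W0 = X * (Yt - Y) * X := by
    rw [hW0, hW2, mul_sub, sub_mul]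
  rw [h1, key_XZX X (Yt - Y) hdetX htrZ, hη, hδ]
end

section
/- Let A = H with attracting/repelling fixed points s₁ > 0 > u₁ and B with fixed points s₂ > 0 > u₂, both hyperbolic elements of SL(2,ℝ) (trace > 2), with u₂ < u₁ < 0 < s₁ < s₂. Then for every nonempty finite word w over {A, B}, the product matrix [w] lies in SL(2,ℝ) with trace ≥ 2, and if w contains both letters then tr[w] > 2. -/
/-!
For `u < 0 < s` and `l > 1` every entry of `H^l_{s,u}` is positive, and entrywise positive
matrices are closed under multiplication, so every word product is an entrywise positive matrix
of determinant `1`. For such a matrix `!![a, b; c, d]` one has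
`(a + d)² = (a - d)² + 4 (1 + b c) > 4`, hence its trace exceeds `2`.
-/

open Matrix

/-- The hyperbolic matrix `H^λ_{s,u}` with attracting fixed point `s` and
repelling fixed point `u`. -/
noncomputable def Hmat (l s u : ℝ) : Matrix (Fin 2) (Fin 2) ℝ :=
  !![s, u; 1, 1] * !![l, 0; 0, l⁻¹] * (!![s, u; 1, 1])⁻¹

namespace Matrix

def EntrywisePos {m n R : Type*} [Zero R] [LT R] (M : Matrix m n R) : Prop :=
  ∀ i j, 0 < M i j

theorem EntrywisePos.mul {n R : Type*} [Fintype n] [Nonempty n] [Semiring R] [PartialOrder R]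
    [IsStrictOrderedRing R] {M N : Matrix n n R} (hM : M.EntrywisePos) (hN : N.EntrywisePos) :
    (M * N).EntrywisePos := fun i j =>
  Finset.sum_pos (fun k _ => mul_pos (hM i k) (hN k j)) Finset.univ_nonempty

theorem two_lt_trace_of_entrywisePos_of_det_eq_one {R : Type*} [CommRing R] [LinearOrder R]
    [IsStrictOrderedRing R] {M : Matrix (Fin 2) (Fin 2) R} (hM : M.EntrywisePos)
    (hdet : M.det = 1) : 2 < M.trace := by
  rw [det_fin_two] at hdet
  rw [trace_fin_two]
  nlinarith [sq_nonneg (M 0 0 - M 1 1), mul_pos (hM 0 1) (hM 1 0), hM 0 0, hM 1 1]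

end Matrix

theorem Hmat_eq_smul (l s u : ℝ) :
    Hmat l s u = (s - u)⁻¹ • !![s * l - u * l⁻¹, s * u * (l⁻¹ - l); l - l⁻¹, s * l⁻¹ - u * l] := by
  have hinv : (!![s, u; 1, 1] : Matrix (Fin 2) (Fin 2) ℝ)⁻¹ = (s - u)⁻¹ • !![1, -u; -1, s] := by
    rw [inv_def, det_fin_two_of, adjugate_fin_two_of, mul_one, mul_one, Ring.inverse_eq_inv']
  rw [Hmat, hinv]
  ext i j
  fin_cases i <;> fin_cases j <;> simp [mul_apply, Fin.sum_univ_two] <;> ring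

theorem Hmat_entrywisePos {l s u : ℝ} (hl : 1 < l) (hu : u < 0) (hs : 0 < s) :
    (Hmat l s u).EntrywisePos := by
  have hl₀ : 0 < l := by linarith
  have hlinv : l⁻¹ < l := (inv_lt_one_of_one_lt₀ hl).trans hl
  have hsu : 0 < (s - u)⁻¹ := inv_pos.2 (by linarith)
  rw [Hmat_eq_smul]
  intro i j
  fin_cases i <;> fin_cases j <;> simp only [Matrix.smul_apply, smul_eq_mul] <;>
    refine mul_pos hsu ?_ <;> simp
  · nlinarith [mul_pos hs hl₀, mul_pos (neg_pos.2 hu) (inv_pos.2 hl₀)]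
  · exact mul_pos_of_neg_of_neg (mul_neg_of_pos_of_neg hs hu) (sub_neg.2 hlinv)
  · exact hlinv
  · nlinarith [mul_pos hs (inv_pos.2 hl₀), mul_pos (neg_pos.2 hu) hl₀]

theorem Hmat_det {l s u : ℝ} (hl : l ≠ 0) (hsu : s ≠ u) : (Hmat l s u).det = 1 := by
  have hP : IsUnit (!![s, u; 1, 1] : Matrix (Fin 2) (Fin 2) ℝ) := by
    rw [isUnit_iff_isUnit_det, det_fin_two_of, mul_one, mul_one]
    exact (sub_ne_zero.2 hsu).isUnit
  rw [Hmat, det_conj hP, det_fin_two_of, mul_zero, sub_zero, mul_inv_cancel₀ hl]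

/-- For a co-parallel pair in normal form, every nonempty word product lies in
`SL(2,ℝ)` with trace `≥ 2`, strictly `> 2` if the word uses both letters. -/
theorem word_product_coparallel
    (l₁ l₂ s₁ s₂ u₁ u₂ : ℝ) (hl₁ : 1 < l₁) (hl₂ : 1 < l₂)
    (hu : u₂ < u₁) (hu₁ : u₁ < 0) (hs₁ : 0 < s₁) (hs : s₁ < s₂)
    (A B : Matrix (Fin 2) (Fin 2) ℝ)
    (hA : A = Hmat l₁ s₁ u₁) (hB : B = Hmat l₂ s₂ u₂)
    (w : List Bool) (hw : w ≠ []) :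
    ((w.map (fun i => cond i B A)).prod).det = 1 ∧
    2 ≤ ((w.map (fun i => cond i B A)).prod).trace ∧
    ((false ∈ w ∧ true ∈ w) →
      2 < ((w.map (fun i => cond i B A)).prod).trace) := by
  have hletters : ∀ M ∈ w.map (fun i => cond i B A), M.EntrywisePos ∧ M.det = 1 := by
    simp only [List.mem_map]
    rintro M ⟨(_ | _), -, rfl⟩
    · exact hA ▸ ⟨Hmat_entrywisePos hl₁ hu₁ hs₁, Hmat_det (by linarith) (by linarith)⟩
    · exact hB ▸ ⟨Hmat_entrywisePos hl₂ (by linarith) (by linarith),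
        Hmat_det (by linarith) (by linarith)⟩
  obtain ⟨hpos, hdet⟩ := List.prod_induction_nonempty
    (fun M : Matrix (Fin 2) (Fin 2) ℝ => M.EntrywisePos ∧ M.det = 1)
    (fun M N hM hN => ⟨hM.1.mul hN.1, by rw [det_mul, hM.2, hN.2, one_mul]⟩)
    (by simpa using hw) hletters
  have htrace := two_lt_trace_of_entrywisePos_of_det_eq_one hpos hdet
  exact ⟨hdet, htrace.le, fun _ => htrace⟩
end

section
/- Let (A,B) be a pair of 2×2 positive matrices with determinant 1, traces ≥ 2, whose Möbius maps have attracting fixed points s_A < s_B in (0,∞) and repelling fixed points u_B < u_A in (−∞,0) (a co-parallel/balanced pair in normal form, allowing parabolic endpoints). Set C = AB and D = BA. Then s_D = B̲(s_C) > s_C and u_D = B̲(u_C) > u_C, i.e., the attracting and repelling fixed points of D both lie strictly to the right of those of C; in particular {C, D} is a crossing pair. -/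
open Matrix

/-- The Möbius action of a `2×2` matrix on the real line. -/
noncomputable def mob (M : Matrix (Fin 2) (Fin 2) ℝ) (x : ℝ) : ℝ :=
  (M 0 0 * x + M 0 1) / (M 1 0 * x + M 1 1)

private lemma fix_clear (p q r s x : ℝ) (hx : x ≠ 0)
    (hfix : (p*x + q)/(r*x + s) = x) :
    p*x + q = x*(r*x + s) ∧ r*x + s ≠ 0 := by
  rcases eq_or_ne (r*x + s) 0 with h | h
  · rw [h, div_zero] at hfix
    exact absurd hfix.symm hx
  · exact ⟨(div_eq_iff h).mp hfix, h⟩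

private lemma vieta (p q r s u v : ℝ) (huv : u ≠ v)
    (hu : p*u + q = u*(r*u + s)) (hv : p*v + q = v*(r*v + s)) :
    r*(u+v) = p - s ∧ r*u*v = -q := by
  have hne : u - v ≠ 0 := sub_ne_zero.mpr huv
  have h1 : (u - v) * (r*(u+v) - (p - s)) = 0 := by linear_combination hv - hu
  have h2 : (u - v) * (r*u*v + q) = 0 := by linear_combination u*hv - v*hu
  constructor
  · have := (mul_eq_zero.mp h1).resolve_left hne
    linarith
  · have := (mul_eq_zero.mp h2).resolve_left hne
    linarith

private lemma pos_factor (x y : ℝ) (hy : 0 < y) (h : 0 < x * y) : 0 < x := by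
  by_contra h'
  push_neg at h'
  nlinarith

set_option maxHeartbeats 1000000 in
/-- For a balanced pair `(A,B)` in normal form, the fixed points of `D = BA`
lie strictly to the right of those of `C = AB`: `{C,D}` is a crossing pair. -/
theorem crossing_pair_AB_BA (A B : Matrix (Fin 2) (Fin 2) ℝ)
    (hApos : ∀ i j, 0 < A i j) (hBpos : ∀ i j, 0 < B i j)
    (hAdet : A.det = 1) (hBdet : B.det = 1)
    (hAtr : 2 ≤ A.trace) (hBtr : 2 ≤ B.trace)
    (sA sB uA uB : ℝ)
    (huB : uB < uA) (huA : uA < 0) (hsA : 0 < sA) (hsAB : sA < sB)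
    (hfixsA : mob A sA = sA) (hfixuA : mob A uA = uA)
    (hfixsB : mob B sB = sB) (hfixuB : mob B uB = uB)
    (C D : Matrix (Fin 2) (Fin 2) ℝ) (hC : C = A * B) (hD : D = B * A)
    (sC uC sD uD : ℝ)
    (huC : uC < 0) (hsC : 0 < sC) (huD : uD < 0) (hsD : 0 < sD)
    (hfixsC : mob C sC = sC) (hfixuC : mob C uC = uC)
    (hfixsD : mob D sD = sD) (hfixuD : mob D uD = uD) :
    sD = mob B sC ∧ sC < sD ∧ uD = mob B uC ∧ uC < uD := by
  subst hC hD
  rw [Matrix.det_fin_two] at hAdet hBdet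
  simp only [mob, Matrix.mul_apply, Fin.sum_univ_two] at hfixsA hfixuA hfixsB hfixuB hfixsC hfixuC hfixsD hfixuD ⊢
  obtain ⟨a, b, c, d, e, f, g, k, ha, hb, hc, hd, he, hf, hg, hk⟩ :
      ∃ a b c d e f g k : ℝ, A 0 0 = a ∧ A 0 1 = b ∧ A 1 0 = c ∧ A 1 1 = d ∧
        B 0 0 = e ∧ B 0 1 = f ∧ B 1 0 = g ∧ B 1 1 = k :=
    ⟨_, _, _, _, _, _, _, _, rfl, rfl, rfl, rfl, rfl, rfl, rfl, rfl⟩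
  have ha0 : 0 < a := ha ▸ hApos 0 0
  have hb0 : 0 < b := hb ▸ hApos 0 1
  have hc0 : 0 < c := hc ▸ hApos 1 0
  have hd0 : 0 < d := hd ▸ hApos 1 1
  have he0 : 0 < e := he ▸ hBpos 0 0
  have hf0 : 0 < f := hf ▸ hBpos 0 1
  have hg0 : 0 < g := hg ▸ hBpos 1 0
  have hk0 : 0 < k := hk ▸ hBpos 1 1
  rw [ha, hb, hc, hd] at hAdet hfixsA hfixuA hfixsC hfixuC hfixsD hfixuD
  rw [he, hf, hg, hk] at hBdet hfixsB hfixuB hfixsC hfixuC hfixsD hfixuD ⊢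
  have hsB : 0 < sB := lt_trans hsA hsAB
  have huB0 : uB < 0 := lt_trans huB huA
  -- polynomial fixed-point equations
  obtain ⟨EAs, _⟩ := fix_clear _ _ _ _ _ (ne_of_gt hsA) hfixsA
  obtain ⟨EAu, _⟩ := fix_clear _ _ _ _ _ (ne_of_lt huA) hfixuA
  obtain ⟨EBs, _⟩ := fix_clear _ _ _ _ _ (ne_of_gt hsB) hfixsB
  obtain ⟨EBu, _⟩ := fix_clear _ _ _ _ _ (ne_of_lt huB0) hfixuB
  obtain ⟨ECs, _⟩ := fix_clear _ _ _ _ _ (ne_of_gt hsC) hfixsC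
  obtain ⟨ECu, _⟩ := fix_clear _ _ _ _ _ (ne_of_lt huC) hfixuC
  obtain ⟨EDs, _⟩ := fix_clear _ _ _ _ _ (ne_of_gt hsD) hfixsD
  obtain ⟨EDu, _⟩ := fix_clear _ _ _ _ _ (ne_of_lt huD) hfixuD
  -- Vieta relations
  obtain ⟨vAs, vAp⟩ := vieta a b c d uA sA (ne_of_lt (lt_trans huA hsA)) EAu EAs
  obtain ⟨vBs, vBp⟩ := vieta e f g k uB sB (ne_of_lt (lt_trans huB0 hsB)) EBu EBs
  obtain ⟨vCs, vCp⟩ := vieta _ _ _ _ uC sC (ne_of_lt (lt_trans huC hsC)) ECu ECs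
  obtain ⟨vDs, vDp⟩ := vieta _ _ _ _ uD sD (ne_of_lt (lt_trans huD hsD)) EDu EDs
  -- denominators of B at its own fixed points
  have DBs0 : 0 < g*sB + k := by positivity
  have prodB : (g*uB + k) * (g*sB + k) = 1 := by
    linear_combination g*vBp + k*vBs + hBdet
  have DBu0 : 0 < g*uB + k := pos_factor _ _ DBs0 (by rw [prodB]; norm_num)
  -- q_C(uB) = Dn_B(uB) * q_A(uB), in factored form
  have hRC : 0 < c*e + d*g := by positivity
  have qfacu : (c*e + d*g)*((uC - uB)*(sC - uB))
      = (g*uB + k) * (c*((uA - uB)*(sA - uB))) := by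
    linear_combination (c*uB - a) * EBu + (-uB)*vCs + vCp + (g*uB+k)*uB*vAs - (g*uB+k)*vAp
  have qfacs : (c*e + d*g)*((sB - uC)*(sB - sC))
      = (g*sB + k) * (c*((sB - uA)*(sB - sA))) := by
    linear_combination (c*sB - a) * EBs + (-sB)*vCs + vCp + (g*sB+k)*sB*vAs - (g*sB+k)*vAp
  have huBuC : uB < uC := by
    have hpos : 0 < (c*e + d*g)*((uC - uB)*(sC - uB)) := by
      rw [qfacu]
      exact mul_pos DBu0 (mul_pos hc0 (mul_pos (by linarith) (by linarith)))
    have h2 : 0 < (uC - uB)*(sC - uB) := pos_factor _ _ hRC (by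
      rw [mul_comm] at hpos; exact hpos)
    have h3 : 0 < uC - uB := pos_factor _ _ (show (0:ℝ) < sC - uB by linarith) h2
    linarith
  have hsCsB : sC < sB := by
    have hpos : 0 < (c*e + d*g)*((sB - uC)*(sB - sC)) := by
      rw [qfacs]
      exact mul_pos DBs0 (mul_pos hc0 (mul_pos (by linarith) (by linarith)))
    have h2 : 0 < (sB - uC)*(sB - sC) := pos_factor _ _ hRC (by
      rw [mul_comm] at hpos; exact hpos)
    have h4 : 0 < sB - sC := pos_factor _ _ (show (0:ℝ) < sB - uC by linarith)
      (by rw [mul_comm] at h2; exact h2)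
    linarith
  -- denominators of B at the fixed points of C
  have DbS : 0 < g*sC + k := by positivity
  have DbU : 0 < g*uC + k := by
    have : g*uB ≤ g*uC := mul_le_mul_of_nonneg_left (le_of_lt huBuC) (le_of_lt hg0)
    linarith
  -- mob B sC and mob B uC are fixed points of D = B*A
  have kS2 : (g*a + k*c) * (((e*sC + f) - sD*(g*sC + k)) * ((e*sC + f) - uD*(g*sC + k))) = 0 := by
    linear_combination (f*g - e*k) * ECs - ((e*sC+f)*(g*sC+k))*vDs + (g*sC+k)^2*vDp
  have kU2 : (g*a + k*c) * (((e*uC + f) - sD*(g*uC + k)) * ((e*uC + f) - uD*(g*uC + k))) = 0 := by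
    linear_combination (f*g - e*k) * ECu - ((e*uC+f)*(g*uC+k))*vDs + (g*uC+k)^2*vDp
  have hRD : 0 < g*a + k*c := by positivity
  have hfS : ((e*sC + f) - sD*(g*sC + k)) * ((e*sC + f) - uD*(g*sC + k)) = 0 :=
    (mul_eq_zero.mp kS2).resolve_left (ne_of_gt hRD)
  have hfU : ((e*uC + f) - sD*(g*uC + k)) * ((e*uC + f) - uD*(g*uC + k)) = 0 :=
    (mul_eq_zero.mp kU2).resolve_left (ne_of_gt hRD)
  -- identify the positive fixed point: e*sC+f = sD*(g*sC+k)
  have hfactS : e*sC + f = sD*(g*sC + k) := by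
    rcases mul_eq_zero.mp hfS with h | h
    · linarith
    · exfalso
      have h1 : 0 < e*sC + f := by positivity
      have h2 : uD*(g*sC + k) < 0 := mul_neg_of_neg_of_pos huD DbS
      linarith
  -- cross-difference identity
  have hx : (e*uC + f)*(g*sC + k) - (e*sC + f)*(g*uC + k) = uC - sC := by
    linear_combination (uC - sC) * hBdet
  have hfactU : e*uC + f = uD*(g*uC + k) := by
    rcases mul_eq_zero.mp hfU with h | h
    · exfalso
      have hzero : (0:ℝ) = uC - sC := by
        linear_combination hx - (g*sC + k)*h + (g*uC + k)*hfactS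
      linarith
    · linarith
  -- strict monotonicity gaps
  have idS : (sD - sC)*(g*sC + k) = (g*(sC - uB))*(sB - sC) := by
    linear_combination (-1)*hfactS - sC*vBs + vBp
  have idU : (uD - uC)*(g*uC + k) = (g*(uC - uB))*(sB - uC) := by
    linear_combination (-1)*hfactU - uC*vBs + vBp
  have hsCsD : sC < sD := by
    have : 0 < (sD - sC)*(g*sC + k) := by
      rw [idS]
      exact mul_pos (mul_pos hg0 (by linarith)) (by linarith)
    have := pos_factor _ _ DbS this
    linarith
  have huCuD : uC < uD := by
    have : 0 < (uD - uC)*(g*uC + k) := by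
      rw [idU]
      exact mul_pos (mul_pos hg0 (by linarith)) (by linarith)
    have := pos_factor _ _ DbU this
    linarith
  refine ⟨?_, hsCsD, ?_, huCuD⟩
  · rw [eq_div_iff (ne_of_gt DbS)]
    linarith [hfactS]
  · rw [eq_div_iff (ne_of_gt DbU)]
    linarith [hfactU]
end

section
/- Let A, B ∈ SL(2,ℝ) form a balanced pair (in normal form: hyperbolic-hyperbolic with co-parallel fixed points, hyperbolic-parabolic, or the parabolic pair (P_x, P_y^t)). Then tr((AB)²) > tr(A²B²). -/
open Matrix

/-- `(A,B)` is a balanced pair in normal form: case (h), (m) or (p). -/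
def BalancedNormalForm (A B : Matrix (Fin 2) (Fin 2) ℝ) : Prop :=
  (∃ l₁ l₂ s₁ s₂ u₁ u₂ : ℝ, 1 < l₁ ∧ 1 < l₂ ∧
      u₂ < u₁ ∧ u₁ < 0 ∧ 0 < s₁ ∧ s₁ < s₂ ∧
      A = Hmat l₁ s₁ u₁ ∧ B = Hmat l₂ s₂ u₂) ∨
  (∃ l s u x : ℝ, 1 < l ∧ u < 0 ∧ 0 < s ∧ 0 < x ∧
      A = Hmat l s u ∧ B = !![1, 0; x, 1]) ∨
  (∃ x y : ℝ, 0 < x ∧ 0 < y ∧ A = !![1, 0; x, 1] ∧ B = !![1, y; 0, 1])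

lemma Hmat_entries (l s u : ℝ) (hl : 1 < l) (h : s - u ≠ 0) :
    ∃ a k : ℝ, 0 < k ∧ Hmat l s u = !![a, -(s*u*k)/(s-u);
                              k/(s-u), a - (s+u)*k/(s-u)] := by
  have hl0 : (0:ℝ) < l := by linarith
  have hl0' : l ≠ 0 := ne_of_gt hl0
  have hkpos : 0 < l - l⁻¹ := by
    have : l⁻¹ < 1 := by rw [inv_lt_one_iff₀]; right; exact hl
    linarith
  refine ⟨(s*l - u*l⁻¹)/(s-u), l - l⁻¹, hkpos, ?_⟩
  have hdet : (!![s, u; 1, 1] : Matrix (Fin 2) (Fin 2) ℝ).det = s - u := by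
    simp [Matrix.det_fin_two_of]
  have hinv : (!![s, u; 1, 1] : Matrix (Fin 2) (Fin 2) ℝ)⁻¹
      = (s - u)⁻¹ • !![1, -u; -1, s] := by
    rw [Matrix.inv_def, hdet, Matrix.adjugate_fin_two_of, Ring.inverse_eq_inv']
  rw [Hmat, hinv]
  ext i j
  fin_cases i <;> fin_cases j <;>
    simp [Matrix.mul_apply, Fin.sum_univ_two] <;> field_simp <;> ring

lemma trace_diff (a b c d e f g k : ℝ) :
    (((!![a,b;c,d] : Matrix (Fin 2) (Fin 2) ℝ) * !![e,f;g,k]) * (!![a,b;c,d] * !![e,f;g,k])).trace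
    - ((!![a,b;c,d] * !![a,b;c,d] * (!![e,f;g,k] * !![e,f;g,k])).trace)
    = (b*g - c*f)^2 + (f*(a-d) - b*(e-k)) * (c*(e-k) - g*(a-d)) := by
  simp [Matrix.trace_fin_two, Matrix.mul_apply, Fin.sum_univ_two]
  ring

theorem trace_ABAB_gt_trace_AABB (A B : Matrix (Fin 2) (Fin 2) ℝ)
    (h : BalancedNormalForm A B) :
    ((A * B) * (A * B)).trace > (A * A * (B * B)).trace := by
  rcases h with ⟨l₁, l₂, s₁, s₂, u₁, u₂, h1, h2, h3, h4, h5, h6, hA, hB⟩ |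
    ⟨l, s, u, x, h1, h2, h3, h4, hA, hB⟩ | ⟨x, y, hx, hy, hA, hB⟩
  · -- case (h)
    have hd1 : (0:ℝ) < s₁ - u₁ := by linarith
    have hd2 : (0:ℝ) < s₂ - u₂ := by linarith
    obtain ⟨a₁, k₁, hk1, hA'⟩ := Hmat_entries l₁ s₁ u₁ h1 (ne_of_gt hd1)
    obtain ⟨a₂, k₂, hk2, hB'⟩ := Hmat_entries l₂ s₂ u₂ h2 (ne_of_gt hd2)
    rw [hA, hB, hA', hB', gt_iff_lt, ← sub_pos, trace_diff]
    have hF : 0 < (k₁*k₂)^2 *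
        ((s₂-s₁)*(u₁-u₂)*(s₁-u₂)*(s₂-u₁)) / ((s₁-u₁)*(s₂-u₂))^2 := by
      have e1 : 0 < s₁ - u₂ := by linarith
      have e2 : 0 < s₂ - u₁ := by linarith
      have e3 : 0 < s₂ - s₁ := by linarith
      have e4 : 0 < u₁ - u₂ := by linarith
      positivity
    refine lt_of_lt_of_le hF (le_of_eq ?_)
    have hd1' : s₁ - u₁ ≠ 0 := ne_of_gt hd1
    have hd2' : s₂ - u₂ ≠ 0 := ne_of_gt hd2
    field_simp
    ring
  · -- case (m)
    have hd : (0:ℝ) < s - u := by linarith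
    obtain ⟨a, k, hk, hA'⟩ := Hmat_entries l s u h1 (ne_of_gt hd)
    rw [hA, hB, hA', gt_iff_lt, ← sub_pos, trace_diff]
    have hb : 0 < -(s*u*k)/(s-u) := by
      have : 0 < -(s*u*k) := by nlinarith [mul_pos (mul_pos h3 (neg_pos.mpr h2)) hk]
      positivity
    have hF : 0 < (-(s*u*k)/(s-u) * x)^2 := by positivity
    refine lt_of_lt_of_le hF (le_of_eq ?_)
    ring
  · -- case (p)
    rw [hA, hB, gt_iff_lt, ← sub_pos, trace_diff]
    have hF : 0 < (x*y)^2 := by positivity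
    refine lt_of_lt_of_le hF (le_of_eq ?_)
    ring
end

section
/- Let X be a topological space and f : X × [0,1] → ℝ such that: (1) for every x ∈ X, α ↦ f(x,α) is continuous and strictly concave on [0,1], attaining its maximum at a unique point τ(x); (2) there is a dense set D ⊆ [0,1] such that for every α ∈ D, x ↦ f(x,α) is continuous. Then the function τ : X → [0,1] is continuous. -/
/-!
Concavity makes `α ↦ f x α` strictly increasing on `[0, τ x]` and strictly decreasing on
`[τ x, 1]`. Hence, for `a < b`, the sign of `f x b - f x a` tells on which side of `a` or `b`
the maximizer lies: `f x a < f x b` forces `a < τ x`. Given `l < τ x₀`, choose `a < b` in `D`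
between `l` and `τ x₀`; then `f x₀ a < f x₀ b`, this strict inequality between two continuous
functions of `x` persists near `x₀`, and so `l < a < τ x` there. The upper bound is symmetric.
-/

open Set Filter Topology

section ConcaveMaximizer

variable {𝕜 : Type*} [Field 𝕜] [LinearOrder 𝕜] [IsStrictOrderedRing 𝕜] {s : Set 𝕜} {f : 𝕜 → 𝕜}
  {t a b : 𝕜}

theorem ConcaveOn.left_lt_of_isMaxOn (hf : ConcaveOn 𝕜 s f) (hmax : IsMaxOn f s t) (ht : t ∈ s)
    (ha : a ∈ s) (hb : b ∈ s) (hab : a < b) (hfab : f a < f b) : a < t := by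
  by_contra! hta
  rcases hta.eq_or_lt with rfl | hta
  · exact (hfab.trans_le (hmax hb)).false
  · exact ((hf.strictMonoOn hb hab hfab ⟨ht, hta.le⟩ ⟨ha, le_rfl⟩ hta).trans_le (hmax ha)).false

theorem ConcaveOn.lt_right_of_isMaxOn (hf : ConcaveOn 𝕜 s f) (hmax : IsMaxOn f s t) (ht : t ∈ s)
    (ha : a ∈ s) (hb : b ∈ s) (hab : a < b) (hfab : f b < f a) : t < b := by
  by_contra! hbt
  rcases hbt.eq_or_lt with rfl | hbt
  · exact (hfab.trans_le (hmax ha)).false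
  · exact ((hf.strictAntiOn ha hab hfab ⟨hb, le_rfl⟩ ⟨ht, hbt.le⟩ hbt).trans_le (hmax hb)).false

theorem StrictConcaveOn.apply_lt_of_isMaxOn (hf : StrictConcaveOn 𝕜 s f) (hmax : IsMaxOn f s t)
    (ht : t ∈ s) (ha : a ∈ s) (hat : a ≠ t) : f a < f t :=
  (hmax ha).lt_of_ne fun h ↦ hat <|
    hf.eq_of_isMaxOn (fun _ hy ↦ h ▸ hmax hy) hmax ha ht

theorem StrictConcaveOn.strictMonoOn_Iic_of_isMaxOn (hf : StrictConcaveOn 𝕜 s f)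
    (hmax : IsMaxOn f s t) (ht : t ∈ s) : StrictMonoOn f (s ∩ Iic t) := by
  rintro a ⟨ha, -⟩ b ⟨hb, hbt⟩ hab
  have hft : f a < f t := hf.apply_lt_of_isMaxOn hmax ht ha (hab.trans_le hbt).ne
  rcases hbt.eq_or_lt with rfl | hbt
  · exact hft
  · have := hf.lt_on_openSegment ha ht (hab.trans hbt).ne
      (by rw [openSegment_eq_Ioo (hab.trans hbt)]; exact ⟨hab, hbt⟩)
    rwa [min_eq_left hft.le] at this

theorem StrictConcaveOn.strictAntiOn_Ici_of_isMaxOn (hf : StrictConcaveOn 𝕜 s f)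
    (hmax : IsMaxOn f s t) (ht : t ∈ s) : StrictAntiOn f (s ∩ Ici t) := by
  rintro a ⟨ha, hta⟩ b ⟨hb, -⟩ hab
  have hft : f b < f t := hf.apply_lt_of_isMaxOn hmax ht hb (hta.trans_lt hab).ne'
  rcases hta.eq_or_lt with rfl | hta
  · exact hft
  · have := hf.lt_on_openSegment ht hb (hta.trans hab).ne
      (by rw [openSegment_eq_Ioo (hta.trans hab)]; exact ⟨hta, hab⟩)
    rwa [min_eq_right hft.le] at this

end ConcaveMaximizer

theorem exists_pair_mem_Ioo_of_Ioo_subset_closure {α : Type*} [LinearOrder α] [TopologicalSpace α]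
    [OrderTopology α] [DenselyOrdered α] {D : Set α} {l r : α} (hD : Ioo l r ⊆ closure D)
    (hlr : l < r) : ∃ a ∈ D, ∃ b ∈ D, l < a ∧ a < b ∧ b < r := by
  have meets {l' : α} (hl' : l ≤ l') (hl'r : l' < r) : (Ioo l' r ∩ D).Nonempty := by
    obtain ⟨m, hm⟩ := exists_between hl'r
    exact mem_closure_iff.1 (hD ⟨hl'.trans_lt hm.1, hm.2⟩) _ isOpen_Ioo hm
  obtain ⟨a, ⟨hla, har⟩, haD⟩ := meets le_rfl hlr
  obtain ⟨b, ⟨hab, hbr⟩, hbD⟩ := meets hla.le har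
  exact ⟨a, haD, b, hbD, hla, hab, hbr⟩

section Family

variable {X : Type*} [TopologicalSpace X] {f : X → ℝ → ℝ} {τ : X → ℝ} {s : Set ℝ} {x₀ : X}
  {a b : ℝ}

theorem eventually_lt_of_isMaxOn (hconc : ∀ x, ConcaveOn ℝ s (f x))
    (hmax : ∀ x, IsMaxOn (f x) s (τ x)) (hτ : ∀ x, τ x ∈ s) (ha : a ∈ s) (hb : b ∈ s)
    (hab : a < b) (hfa : Continuous fun x ↦ f x a) (hfb : Continuous fun x ↦ f x b)
    (h₀ : f x₀ a < f x₀ b) : ∀ᶠ x in 𝓝 x₀, a < τ x :=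
  (hfa.continuousAt.eventually_lt hfb.continuousAt h₀).mono fun x hx ↦
    (hconc x).left_lt_of_isMaxOn (hmax x) (hτ x) ha hb hab hx

theorem eventually_gt_of_isMaxOn (hconc : ∀ x, ConcaveOn ℝ s (f x))
    (hmax : ∀ x, IsMaxOn (f x) s (τ x)) (hτ : ∀ x, τ x ∈ s) (ha : a ∈ s) (hb : b ∈ s)
    (hab : a < b) (hfa : Continuous fun x ↦ f x a) (hfb : Continuous fun x ↦ f x b)
    (h₀ : f x₀ b < f x₀ a) : ∀ᶠ x in 𝓝 x₀, τ x < b :=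
  (hfb.continuousAt.eventually_lt hfa.continuousAt h₀).mono fun x hx ↦
    (hconc x).lt_right_of_isMaxOn (hmax x) (hτ x) ha hb hab hx

end Family

theorem maximizer_continuous_general {X : Type*} [TopologicalSpace X]
    (f : X → ℝ → ℝ) (τ : X → ℝ)
    (hconc : ∀ x : X, StrictConcaveOn ℝ (Set.Icc 0 1) (f x))
    (hτmem : ∀ x : X, τ x ∈ Set.Icc (0 : ℝ) 1)
    (hτmax : ∀ x : X, ∀ α ∈ Set.Icc (0 : ℝ) 1, f x α ≤ f x (τ x))
    (D : Set ℝ) (hDdense : Set.Icc (0 : ℝ) 1 ⊆ closure D)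
    (hfc : ∀ α ∈ D, Continuous fun x : X => f x α) :
    Continuous τ := by
  have hmax x : IsMaxOn (f x) (Icc 0 1) (τ x) := isMaxOn_iff.2 (hτmax x)
  have hconc' x : ConcaveOn ℝ (Icc 0 1) (f x) := (hconc x).concaveOn
  refine continuous_iff_continuousAt.2 fun x₀ ↦ tendsto_order.2 ⟨fun l hl ↦ ?_, fun u hu ↦ ?_⟩
  · rcases lt_or_ge l 0 with hl0 | hl0
    · exact .of_forall fun x ↦ hl0.trans_le (hτmem x).1
    obtain ⟨a, haD, b, hbD, hla, hab, hbτ⟩ := exists_pair_mem_Ioo_of_Ioo_subset_closure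
      ((Ioo_subset_Icc_self.trans (Icc_subset_Icc hl0 (hτmem x₀).2)).trans hDdense) hl
    have ha : a ∈ Icc (0 : ℝ) 1 := ⟨hl0.trans hla.le, (hab.trans hbτ).le.trans (hτmem x₀).2⟩
    have hb : b ∈ Icc (0 : ℝ) 1 := ⟨ha.1.trans hab.le, hbτ.le.trans (hτmem x₀).2⟩
    have h₀ : f x₀ a < f x₀ b := (hconc x₀).strictMonoOn_Iic_of_isMaxOn (hmax x₀) (hτmem x₀)
      ⟨ha, (hab.trans hbτ).le⟩ ⟨hb, hbτ.le⟩ hab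
    exact (eventually_lt_of_isMaxOn hconc' hmax hτmem ha hb hab (hfc a haD) (hfc b hbD)
      h₀).mono fun x hx ↦ hla.trans hx
  · rcases lt_or_ge 1 u with hu1 | hu1
    · exact .of_forall fun x ↦ (hτmem x).2.trans_lt hu1
    obtain ⟨a, haD, b, hbD, hτa, hab, hbu⟩ := exists_pair_mem_Ioo_of_Ioo_subset_closure
      ((Ioo_subset_Icc_self.trans (Icc_subset_Icc (hτmem x₀).1 hu1)).trans hDdense) hu
    have hb : b ∈ Icc (0 : ℝ) 1 := ⟨(hτmem x₀).1.trans (hτa.trans hab).le, hbu.le.trans hu1⟩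
    have ha : a ∈ Icc (0 : ℝ) 1 := ⟨(hτmem x₀).1.trans hτa.le, hab.le.trans hb.2⟩
    have h₀ : f x₀ b < f x₀ a := (hconc x₀).strictAntiOn_Ici_of_isMaxOn (hmax x₀) (hτmem x₀)
      ⟨ha, hτa.le⟩ ⟨hb, (hτa.trans hab).le⟩ hab
    exact (eventually_gt_of_isMaxOn hconc' hmax hτmem ha hb hab (hfc a haD) (hfc b hbD)
      h₀).mono fun x hx ↦ hx.trans hbu

/-- Continuity of the maximizer of a family of strictly concave functions. -/
theorem maximizer_continuous {X : Type*} [TopologicalSpace X]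
    (f : X → ℝ → ℝ) (τ : X → ℝ)
    (hcont : ∀ x : X, ContinuousOn (f x) (Set.Icc 0 1))
    (hconc : ∀ x : X, StrictConcaveOn ℝ (Set.Icc 0 1) (f x))
    (hτmem : ∀ x : X, τ x ∈ Set.Icc (0 : ℝ) 1)
    (hτmax : ∀ x : X, ∀ α ∈ Set.Icc (0 : ℝ) 1, f x α ≤ f x (τ x))
    (hτuniq : ∀ x : X, ∀ α ∈ Set.Icc (0 : ℝ) 1, f x α = f x (τ x) → α = τ x)
    (D : Set ℝ) (hD : D ⊆ Set.Icc 0 1) (hDdense : Set.Icc (0 : ℝ) 1 ⊆ closure D)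
    (hfc : ∀ α ∈ D, Continuous fun x : X => f x α) :
    Continuous τ :=
  maximizer_continuous_general f τ hconc hτmem hτmax D hDdense hfc
end

section
/- Let z be a finite word over an alphabet {a,b} such that bb is not a factor of the periodic word z^∞, and suppose there is a word w such that both awa and bwb are factors of z. Write w = aw'. Then w' is a word over the alphabet {a, ba}, and there is a cyclic rotation z' of z such that z' is a word over {a, ba} and both aw'a and baw'ba are factors of z'. -/
/-- `l` is a word over the two-block alphabet `{[a], [b,a]}`. -/
def OverBlocks {α : Type*} (a b : α) (l : List α) : Prop :=
  ∃ chunks : List (List α),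
    (∀ c ∈ chunks, c = [a] ∨ c = [b, a]) ∧ l = chunks.flatten

/-- `v` is a factor of the periodic infinite word `z^∞`. -/
def FactorOfPeriodic {α : Type*} (v z : List α) : Prop :=
  ∃ n : ℕ, v <:+: (List.replicate n z).flatten

lemma ob_of_fuel {α : Type*} {a b : α} :
    ∀ (n : ℕ) (l : List α), l.length ≤ n → (∀ c ∈ l, c = a ∨ c = b) →
      ¬ [b, b] <:+: l → (l.getLast? = none ∨ l.getLast? = some a) → OverBlocks a b l := by
  intro n
  induction n with
  | zero =>
    intro l hl _ _ _
    have : l = [] := List.eq_nil_of_length_eq_zero (Nat.le_zero.mp hl)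
    exact ⟨[], by simp, by simp [this]⟩
  | succ n ih =>
    intro l hl hmem hbb hlast
    match l with
    | [] => exact ⟨[], by simp, by simp⟩
    | x :: t =>
      rcases hmem x (by simp) with hx | hx
      · match t with
        | [] => exact ⟨[[a]], by simp, by simp [hx]⟩
        | y :: t₂ =>
          obtain ⟨ch, h1, h2⟩ := ih (y :: t₂) (by simp at hl ⊢; omega)
            (fun c hc => hmem c (by simp [hc]))
            (fun h => hbb (h.trans (List.suffix_cons x _).isInfix))
            (by rwa [List.getLast?_cons_cons] at hlast)
          exact ⟨[a] :: ch, fun c hc => (List.mem_cons.mp hc).elim Or.inl (h1 c),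
            by simp [hx, h2]⟩
      · match t with
        | [] =>
          rcases hlast with h | h
          · simp at h
          · simp at h
            exact ⟨[[a]], by simp, by simp [h]⟩
        | y :: t₂ =>
          have hy : y = a := by
            rcases hmem y (by simp) with h | h
            · exact h
            · exact absurd (⟨[], t₂, by simp [hx, h]⟩ : [b,b] <:+: x :: y :: t₂) hbb
          obtain ⟨ch, h1, h2⟩ := ih t₂ (by simp at hl ⊢; omega)
            (fun c hc => hmem c (by simp [hc]))
            (fun h => hbb (h.trans ((List.suffix_cons y _).trans (List.suffix_cons x _)).isInfix))
            (by
              match t₂ with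
              | [] => simp
              | u :: t₃ =>
                rw [List.getLast?_cons_cons, List.getLast?_cons_cons] at hlast
                exact hlast)
          exact ⟨[b, a] :: ch, fun c hc => (List.mem_cons.mp hc).elim Or.inr (h1 c),
            by simp [hx, hy, h2]⟩

theorem claim_rotation {α : Type*} (a b : α) (hab : a ≠ b)
    (z : List α) (hz : ∀ c ∈ z, c = a ∨ c = b)
    (hbb : ¬ FactorOfPeriodic [b, b] z)
    (w w' : List α)
    (hawa : ([a] ++ w ++ [a]) <:+: z) (hbwb : ([b] ++ w ++ [b]) <:+: z)
    (hw : w = a :: w') :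
    OverBlocks a b w' ∧
    ∃ z' : List α, (∃ u v : List α, z = u ++ v ∧ z' = v ++ u) ∧
      OverBlocks a b z' ∧
      ([a] ++ w' ++ [a]) <:+: z' ∧ ([b, a] ++ w' ++ [b, a]) <:+: z' := by
  subst hw
  obtain ⟨q₁, t₁, hq⟩ := hawa
  obtain ⟨p₁, s₁, hp⟩ := hbwb
  have hbb2 : ¬ [b, b] <:+: z ++ z := by
    intro h
    exact hbb ⟨2, by simpa using h⟩
  have hmem2 : ∀ c ∈ z ++ z, c = a ∨ c = b := fun c hc => hz c (by
    rcases List.mem_append.mp hc with h | h <;> exact h)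
  have hzinf : z <:+: z ++ z := ⟨[], z, by simp⟩
  have adjL : ∀ x, [x, b] <:+: z ++ z → x = a := by
    intro x h
    rcases hmem2 x (List.IsInfix.mem (by simp) h) with h' | h'
    · exact h'
    · rw [h'] at h; exact absurd h hbb2
  have adjR : ∀ x, [b, x] <:+: z ++ z → x = a := by
    intro x h
    rcases hmem2 x (List.IsInfix.mem (by simp) h) with h' | h'
    · exact h'
    · rw [h'] at h; exact absurd h hbb2
  have hw'inf : w' <:+: z := ⟨q₁ ++ [a, a], [a] ++ t₁, by rw [← hq]; simp⟩
  have part1 : OverBlocks a b w' := by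
    refine ob_of_fuel w'.length w' le_rfl
      (fun c hc => hz c (List.IsInfix.mem hc hw'inf))
      (fun h => hbb2 ((h.trans hw'inf).trans hzinf))
      ?_
    rcases List.eq_nil_or_concat w' with h | ⟨N, d, h⟩
    · exact Or.inl (by simp [h])
    · rw [List.concat_eq_append] at h
      have hd : d = a := by
        apply adjL
        refine List.IsInfix.trans ?_ hzinf
        exact ⟨p₁ ++ [b, a] ++ N, s₁, by rw [← hp]; simp [h]⟩
      exact Or.inr (by rw [h, List.getLast?_concat, hd])
  have hnotboth : ¬ (p₁ = [] ∧ s₁ = []) := by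
    rintro ⟨rfl, rfl⟩
    simp only [List.nil_append, List.append_nil] at hp
    exact hbb2 ⟨[b] ++ a :: w', (a :: w') ++ [b], by rw [← hp]; simp⟩
  by_cases hA : p₁.length ≤ q₁.length + 1
  · -- Case A : rotation starting at the b of the bwb occurrence
    obtain ⟨x, M, hLM⟩ : ∃ x M, s₁ ++ p₁ = x :: M := by
      cases hL : s₁ ++ p₁ with
      | nil =>
        rcases List.append_eq_nil_iff.mp hL with ⟨h1, h2⟩
        exact absurd ⟨h2, h1⟩ hnotboth
      | cons x M => exact ⟨x, M, rfl⟩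
    obtain ⟨N, d, hN⟩ : ∃ N d, s₁ ++ p₁ = N ++ [d] := by
      rcases List.eq_nil_or_concat (s₁ ++ p₁) with h | ⟨N, d, h⟩
      · rcases List.append_eq_nil_iff.mp h with ⟨h1, h2⟩
        exact absurd ⟨h2, h1⟩ hnotboth
      · exact ⟨N, d, by simpa [List.concat_eq_append] using h⟩
    have hBL : [b] ++ (s₁ ++ p₁) ++ [b] <:+: z ++ z :=
      ⟨p₁ ++ [b] ++ (a :: w'), (a :: w') ++ [b] ++ s₁, by rw [← hp]; simp⟩
    have hx : x = a := adjR x (List.IsInfix.trans ⟨[], M ++ [b], by simp [hLM]⟩ hBL)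
    have hd : d = a := adjL d (List.IsInfix.trans ⟨[b] ++ N, [], by simp [hN]⟩ hBL)
    refine ⟨part1, ([b] ++ (a :: w') ++ [b] ++ s₁) ++ p₁,
      ⟨p₁, [b] ++ (a :: w') ++ [b] ++ s₁, by rw [← hp]; simp, rfl⟩, ?_, ?_, ?_⟩
    · have hz'inf : (([b] ++ (a :: w') ++ [b] ++ s₁) ++ p₁) <:+: z ++ z :=
        ⟨p₁, [b] ++ (a :: w') ++ [b] ++ s₁, by rw [← hp]; simp⟩
      refine ob_of_fuel _ _ le_rfl (fun c hc => hmem2 c (List.IsInfix.mem hc hz'inf))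
        (fun h => hbb2 (h.trans hz'inf)) ?_
      right
      have h5 : (([b] ++ (a :: w') ++ [b] ++ s₁) ++ p₁)
          = ([b] ++ (a :: w') ++ [b] ++ N) ++ [a] := by
        simp [hN, hd]
      rw [h5, List.getLast?_concat]
    · -- aw'a
      have hS : (([a] ++ w' ++ [a]) ++ t₁) <:+ z := ⟨q₁ ++ [a], by rw [← hq]; simp⟩
      have hv : ([b] ++ (a :: w') ++ [b] ++ s₁) <:+ z := ⟨p₁, by rw [← hp]; simp⟩
      have hlen : (([a] ++ w' ++ [a]) ++ t₁).length
          ≤ ([b] ++ (a :: w') ++ [b] ++ s₁).length := by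
        have e1 := congrArg List.length hq
        have e2 := congrArg List.length hp
        simp only [List.length_append, List.length_cons, List.length_singleton] at e1 e2 ⊢
        omega
      have h6 := List.suffix_of_suffix_length_le hS hv hlen
      exact (List.IsInfix.trans ⟨[], t₁, by simp⟩ h6.isInfix).trans ⟨[], p₁, by simp⟩
    · -- baw'ba
      refine ⟨[], M, ?_⟩
      have h7 : s₁ ++ p₁ = a :: M := by rw [hLM, hx]
      simp [h7]
  · -- Case B
    push_neg at hA
    rcases s₁ with _ | ⟨x, s₂⟩
    · -- s₁ = []
      have hp₁ne : p₁ ≠ [] := fun h => hnotboth ⟨h, rfl⟩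
      rcases p₁ with _ | ⟨y, p₂⟩
      · exact absurd rfl hp₁ne
      have hy : y = a := by
        apply adjR
        exact ⟨(y :: p₂) ++ [b] ++ (a :: w'), p₂ ++ ([b] ++ (a :: w') ++ [b]),
          by rw [← hp]; simp⟩
      refine ⟨part1, (p₂ ++ ([b] ++ (a :: w') ++ [b])) ++ [a],
        ⟨[a], p₂ ++ ([b] ++ (a :: w') ++ [b]), by rw [← hp, hy]; simp, rfl⟩, ?_, ?_, ?_⟩
      · have hz'inf : ((p₂ ++ ([b] ++ (a :: w') ++ [b])) ++ [a]) <:+: z ++ z :=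
          ⟨[a], p₂ ++ ([b] ++ (a :: w') ++ [b]), by rw [← hp, hy]; simp⟩
        refine ob_of_fuel _ _ le_rfl (fun c hc => hmem2 c (List.IsInfix.mem hc hz'inf))
          (fun h => hbb2 (h.trans hz'inf)) ?_
        right
        rw [List.getLast?_concat]
      · have hS : (([a] ++ w' ++ [a]) ++ t₁) <:+ z := ⟨q₁ ++ [a], by rw [← hq]; simp⟩
        have hv : (p₂ ++ ([b] ++ (a :: w') ++ [b])) <:+ z := ⟨[a], by rw [← hp, hy]; simp⟩
        have hlen : (([a] ++ w' ++ [a]) ++ t₁).length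
            ≤ (p₂ ++ ([b] ++ (a :: w') ++ [b])).length := by
          have e1 := congrArg List.length hq
          have e2 := congrArg List.length hp
          simp at e1 e2 ⊢
          omega
        have h6 := List.suffix_of_suffix_length_le hS hv hlen
        exact (List.IsInfix.trans ⟨[], t₁, by simp⟩ h6.isInfix).trans ⟨[], [a], by simp⟩
      · exact ⟨p₂, [], by simp⟩
    · -- s₁ = x :: s₂
      have hx : x = a := by
        apply adjR
        refine List.IsInfix.trans ?_ hzinf
        exact ⟨p₁ ++ [b] ++ (a :: w'), s₂, by rw [← hp]; simp⟩
      have huv : z = (p₁ ++ ([b] ++ (a :: w') ++ [b, a])) ++ s₂ := by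
        rw [← hp, hx]; simp
      refine ⟨part1, s₂ ++ (p₁ ++ ([b] ++ (a :: w') ++ [b, a])),
        ⟨p₁ ++ ([b] ++ (a :: w') ++ [b, a]), s₂, huv, rfl⟩, ?_, ?_, ?_⟩
      · have hz'inf : (s₂ ++ (p₁ ++ ([b] ++ (a :: w') ++ [b, a]))) <:+: z ++ z :=
          ⟨p₁ ++ ([b] ++ (a :: w') ++ [b, a]), s₂, by rw [← hp, hx]; simp⟩
        refine ob_of_fuel _ _ le_rfl (fun c hc => hmem2 c (List.IsInfix.mem hc hz'inf))
          (fun h => hbb2 (h.trans hz'inf)) ?_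
        right
        have h5 : s₂ ++ (p₁ ++ ([b] ++ (a :: w') ++ [b, a]))
            = (s₂ ++ (p₁ ++ ([b] ++ (a :: w') ++ [b]))) ++ [a] := by simp
        rw [h5, List.getLast?_concat]
      · have hP : ((q₁ ++ [a]) ++ ([a] ++ w' ++ [a])) <+: z := ⟨t₁, by rw [← hq]; simp⟩
        have hu : (p₁ ++ ([b] ++ (a :: w') ++ [b, a])) <+: z := ⟨s₂, huv.symm⟩
        have hlen : ((q₁ ++ [a]) ++ ([a] ++ w' ++ [a])).length
            ≤ (p₁ ++ ([b] ++ (a :: w') ++ [b, a])).length := by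
          simp
          omega
        have h6 := List.prefix_of_prefix_length_le hP hu hlen
        exact (List.IsInfix.trans ⟨q₁ ++ [a], [], by simp⟩ h6.isInfix).trans
          ⟨s₂, [], by simp⟩
      · exact ⟨s₂ ++ p₁, [], by simp⟩
end
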